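/- arXiv:2401.13094 — 2 statements merged into one kernel-verified Lean document; each statement's English description precedes it below -/
import Mathlib

section
/- If X₊ has the half-normal density 2φ(x) on [0,∞), X₀ is standard normal, X₊ and X₀ are independent, and δ ∈ (-1,1), then X = δX₊ + √(1-δ²)X₀ has density 2φ(x)Φ(αx) where α = δ/√(1-δ²). -/
open MeasureTheory Real

noncomputable def snPhi (x : ℝ) : ℝ := (Real.sqrt (2 * Real.pi))⁻¹ * Real.exp (-x ^ 2 / 2)

noncomputable def snCdf (x : ℝ) : ℝ := ∫ t in Set.Iic x, snPhi t

/-!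
Conditionally on `X₊ = u`, `X` is `N(δu, 1 - δ²)`, so `X` has density
`x ↦ ∫ 2φ(u) 1{u ≥ 0} φ_{δu, 1-δ²}(x) du`. Completing the square gives
`φ(u) φ_{δu, 1-δ²}(x) = φ(x) φ_{δx, 1-δ²}(u)`, and what is left of the integral is
`P(N(δx, 1 - δ²) ≥ 0) = Φ(δx / √(1 - δ²))`.
-/

open ProbabilityTheory Set Function
open scoped NNReal ENNReal

lemma IndepFun.map_apply_eq_lintegral {Ω α β γ : Type*} [MeasurableSpace Ω] [MeasurableSpace α]
    [MeasurableSpace β] [MeasurableSpace γ] {P : Measure Ω} [IsFiniteMeasure P]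
    {X : Ω → α} {Y : Ω → β} (hX : Measurable X) (hY : Measurable Y) (hXY : IndepFun X Y P)
    {f : α → β → γ} (hf : Measurable (uncurry f)) {A : Set γ} (hA : MeasurableSet A) :
    P.map (fun ω => f (X ω) (Y ω)) A = ∫⁻ u, P.map Y (f u ⁻¹' A) ∂P.map X := by
  rw [show (fun ω => f (X ω) (Y ω)) = uncurry f ∘ fun ω => (X ω, Y ω) from rfl,
    ← Measure.map_map hf (hX.prodMk hY), hXY.map_prod_eq_prod_map_map hX.aemeasurable
    hY.aemeasurable, Measure.map_apply hf hA, Measure.prod_apply (hf hA)]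
  rfl

lemma lintegral_withDensity_apply_eq_withDensity_lintegral {α β : Type*} [MeasurableSpace α]
    [MeasurableSpace β] (μ : Measure α) [SFinite μ] (ν : Measure β) [SFinite ν]
    {g : α → β → ℝ≥0∞} (hg : Measurable (uncurry g)) {A : Set β} (hA : MeasurableSet A) :
    ∫⁻ u, (ν.withDensity (g u)) A ∂μ = ν.withDensity (fun x => ∫⁻ u, g u x ∂μ) A := by
  simp_rw [withDensity_apply _ hA]
  exact lintegral_lintegral_swap hg.aemeasurable

lemma gaussianReal_map_const_add_const_mul (m s : ℝ) :
    (gaussianReal 0 1).map (fun z => m + s * z) = gaussianReal m ⟨s ^ 2, sq_nonneg s⟩ := by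
  rw [show (fun z => m + s * z) = (m + ·) ∘ (s * ·) from rfl,
    ← Measure.map_map (measurable_const_add m) (measurable_const_mul s),
    gaussianReal_map_const_mul, gaussianReal_map_const_add]
  congr 1
  · simp
  · exact mul_one _

lemma map_add_mul_gaussian_eq_withDensity {Ω : Type*} [MeasurableSpace Ω] {P : Measure Ω}
    [IsFiniteMeasure P] {X Y : Ω → ℝ} (hX : Measurable X) (hY : Measurable Y)
    (hXY : IndepFun X Y P) (hYlaw : P.map Y = gaussianReal 0 1) (a : ℝ) {s : ℝ} (hs : s ≠ 0) :
    P.map (fun ω => a * X ω + s * Y ω) = volume.withDensity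
      (fun x => ∫⁻ u, gaussianPDF (a * u) ⟨s ^ 2, sq_nonneg s⟩ x ∂P.map X) := by
  have hv : (⟨s ^ 2, sq_nonneg s⟩ : ℝ≥0) ≠ 0 := NNReal.coe_ne_zero.1 (pow_ne_zero 2 hs)
  ext A hA
  rw [IndepFun.map_apply_eq_lintegral hX hY hXY (f := fun u z => a * u + s * z) (by fun_prop) hA]
  have hpdf : Measurable (uncurry fun u x => gaussianPDF (a * u) ⟨s ^ 2, sq_nonneg s⟩ x) := by
    unfold gaussianPDF gaussianPDFReal; fun_prop
  rw [← lintegral_withDensity_apply_eq_withDensity_lintegral _ _ hpdf hA]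
  refine lintegral_congr fun u => ?_
  rw [hYlaw, ← Measure.map_apply (by fun_prop) hA, gaussianReal_map_const_add_const_mul,
    gaussianReal_of_var_ne_zero _ hv]

lemma gaussianPDFReal_zero_one : gaussianPDFReal 0 1 = snPhi := by
  ext x
  simp [gaussianPDFReal, snPhi]

lemma snPhi_nonneg (x : ℝ) : 0 ≤ snPhi x := by unfold snPhi; positivity

lemma measurable_snPhi : Measurable snPhi :=
  gaussianPDFReal_zero_one ▸ measurable_gaussianPDFReal 0 1

lemma withDensity_ofReal_snPhi :
    volume.withDensity (fun x => ENNReal.ofReal (snPhi x)) = gaussianReal 0 1 := by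
  rw [gaussianReal_of_var_ne_zero 0 one_ne_zero, gaussianPDF_def, gaussianPDFReal_zero_one]

lemma gaussianReal_zero_one_Iic (a : ℝ) :
    gaussianReal 0 1 (Iic a) = ENNReal.ofReal (snCdf a) := by
  rw [gaussianReal_apply_eq_integral 0 one_ne_zero, gaussianPDFReal_zero_one, snCdf]

lemma gaussianReal_Ici_zero (m : ℝ) {s : ℝ} (hs : 0 < s) :
    gaussianReal m ⟨s ^ 2, sq_nonneg s⟩ (Ici 0) = ENNReal.ofReal (snCdf (m / s)) := by
  have hpre : (fun z => m + s * z) ⁻¹' Ici 0 = (fun z => -z) ⁻¹' Iic (m / s) := by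
    ext z
    simp only [mem_preimage, mem_Ici, mem_Iic, le_div_iff₀ hs]
    constructor <;> intro h <;> linarith
  rw [← gaussianReal_map_const_add_const_mul, Measure.map_apply (by fun_prop) measurableSet_Ici,
    hpre, ← Measure.map_apply measurable_neg measurableSet_Iic, gaussianReal_map_neg, neg_zero,
    gaussianReal_zero_one_Iic]

-- Both sides are the density at `(u, x)` of the standard bivariate normal law with correlation `δ`.
lemma snPhi_mul_gaussianPDFReal_swap {δ : ℝ} {v : ℝ≥0} (hv : (v : ℝ) = 1 - δ ^ 2) (x u : ℝ) :
    snPhi u * gaussianPDFReal (δ * u) v x = snPhi x * gaussianPDFReal (δ * x) v u := by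
  rcases eq_or_ne v 0 with rfl | hv0
  · simp [gaussianPDFReal_zero_var]
  have key :
      -u ^ 2 / 2 + -(x - δ * u) ^ 2 / (2 * v) = -x ^ 2 / 2 + -(u - δ * x) ^ 2 / (2 * v) := by
    field_simp
    linear_combination (x ^ 2 - u ^ 2) * hv
  have hexp := congrArg Real.exp key
  rw [Real.exp_add, Real.exp_add] at hexp
  simp only [snPhi, gaussianPDFReal]
  linear_combination (Real.sqrt (2 * Real.pi))⁻¹ * (Real.sqrt (2 * Real.pi * v))⁻¹ * hexp

lemma lintegral_halfNormalPDF_mul_gaussianPDF {δ s : ℝ} (hs : 0 < s) (hδs : s ^ 2 = 1 - δ ^ 2)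
    (x : ℝ) :
    ∫⁻ u, ENNReal.ofReal (if 0 ≤ u then 2 * snPhi u else 0) *
        gaussianPDF (δ * u) ⟨s ^ 2, sq_nonneg s⟩ x
      = ENNReal.ofReal (2 * snPhi x * snCdf (δ / s * x)) := by
  set v : ℝ≥0 := ⟨s ^ 2, sq_nonneg s⟩
  have hv : v ≠ 0 := NNReal.coe_ne_zero.1 (pow_ne_zero 2 hs.ne')
  calc ∫⁻ u, ENNReal.ofReal (if 0 ≤ u then 2 * snPhi u else 0) * gaussianPDF (δ * u) v x
      = ∫⁻ u in Ici 0, ENNReal.ofReal (2 * snPhi x) * gaussianPDF (δ * x) v u := by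
        rw [← lintegral_indicator measurableSet_Ici]
        refine lintegral_congr fun u => ?_
        by_cases hu : 0 ≤ u
        · rw [if_pos hu, indicator_of_mem (mem_Ici.2 hu), gaussianPDF, gaussianPDF,
            ← ENNReal.ofReal_mul (by positivity [snPhi_nonneg u]),
            ← ENNReal.ofReal_mul (by positivity [snPhi_nonneg x]), mul_assoc, mul_assoc,
            snPhi_mul_gaussianPDFReal_swap (v := v) hδs]
        · simp [hu]
    _ = ENNReal.ofReal (2 * snPhi x) * gaussianReal (δ * x) v (Ici 0) := by
        rw [lintegral_const_mul _ (measurable_gaussianPDF _ _), gaussianReal_apply _ hv]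
    _ = ENNReal.ofReal (2 * snPhi x * snCdf (δ / s * x)) := by
        rw [gaussianReal_Ici_zero _ hs, ← ENNReal.ofReal_mul (by positivity [snPhi_nonneg x]),
          mul_div_right_comm]

/-- If `X₊` is half-normal, `X₀` is standard normal, they are independent and `δ ∈ (-1,1)`,
then `δ X₊ + √(1-δ²) X₀` has the skew normal density `2φ(x)Φ(αx)` with `α = δ/√(1-δ²)`. -/
theorem skew_normal_stochastic_representation
    {Ω : Type*} [MeasureSpace Ω] [IsProbabilityMeasure (volume : Measure Ω)]
    (Xp X0 : Ω → ℝ) (hXp : Measurable Xp) (hX0 : Measurable X0)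
    (hhalf : Measure.map Xp (volume : Measure Ω) =
      volume.withDensity (fun x => ENNReal.ofReal (if 0 ≤ x then 2 * snPhi x else 0)))
    (hnorm : Measure.map X0 (volume : Measure Ω) = volume.withDensity (fun x => ENNReal.ofReal (snPhi x)))
    (hindep : ProbabilityTheory.IndepFun Xp X0 (volume : Measure Ω))
    (δ : ℝ) (hδ : δ ∈ Set.Ioo (-1 : ℝ) 1) :
    Measure.map (fun ω => δ * Xp ω + Real.sqrt (1 - δ ^ 2) * X0 ω) (volume : Measure Ω) =
      volume.withDensity
        (fun x => ENNReal.ofReal (2 * snPhi x * snCdf (δ / Real.sqrt (1 - δ ^ 2) * x))) := by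
  have hδ2 : 0 < 1 - δ ^ 2 := by nlinarith [hδ.1, hδ.2]
  have hs : 0 < √(1 - δ ^ 2) := sqrt_pos.2 hδ2
  have hhalf_meas : Measurable fun u : ℝ => ENNReal.ofReal (if 0 ≤ u then 2 * snPhi u else 0) :=
    ((measurable_snPhi.const_mul 2).ite measurableSet_Ici measurable_const).ennreal_ofReal
  rw [map_add_mul_gaussian_eq_withDensity hXp hX0 hindep (hnorm.trans withDensity_ofReal_snPhi) δ
    hs.ne', hhalf]
  congr with x
  rw [lintegral_withDensity_eq_lintegral_mul _ hhalf_meas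
    (by unfold gaussianPDF gaussianPDFReal; fun_prop)]
  exact lintegral_halfNormalPDF_mul_gaussianPDF hs (sq_sqrt hδ2.le) x
end

section
/- For a skew normal random variable X with density 2φ(x)Φ(αx) and δ = α/√(1+α²), the third central moment satisfies E[(X - E[X])³] = ((4-π)/2)·δ³·(2/π)^{3/2}, so that Pearson's skewness index γ₁ = E[(X-E[X])³]/Var(X)^{3/2} equals ((4-π)/2)·δ³(2/π)^{3/2}/(1 - 2δ²/π)^{3/2}. -/
/-!
The density is `φ(x)(1 + ψ(x))` with `ψ(x) = 2Φ(αx) - 1` odd, so the even moments of `X` are those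
of the standard normal and the odd ones are `∫ xⁿ φ ψ`. Stein's identity `∫ x h φ = ∫ h' φ`,
applied to `h = ψ` and `h = x²ψ`, together with `ψ' = 2αφ(αx)` and
`φ(x)φ(αx) = φ(√(1+α²) x) / √(2π)`, gives `E X = δ√(2/π)` and `E X³ = δ√(2/π)(3 - δ²)`.
Expanding `(X - E X)³` and using `E X⁰ = E X² = 1` leaves `δ³√(2/π)(4/π - 1)`.
-/

open MeasureTheory Real

open ProbabilityTheory Set

lemma Function.Odd.integral_eq_zero {G E : Type*} [MeasurableSpace G] [AddGroup G]
    [MeasurableNeg G] [NormedAddCommGroup E] [NormedSpace ℝ E] {μ : Measure G} [μ.IsNegInvariant]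
    {f : G → E} (hf : f.Odd) : ∫ x, f x ∂μ = 0 := by
  have h := integral_neg_eq_self f μ
  simp only [hf _, integral_neg] at h
  have h2 : (2 : ℝ) • ∫ x, f x ∂μ = 0 := by
    rw [two_smul]; nth_rewrite 1 [← h]; exact neg_add_cancel _
  simpa using h2

lemma integral_pow_mul_comp_mul_left (g : ℝ → ℝ) {c : ℝ} (hc : 0 < c) (n : ℕ) :
    ∫ x, x ^ n * g (c * x) = (c ^ (n + 1))⁻¹ * ∫ x, x ^ n * g x := by
  have h := Measure.integral_comp_mul_left (fun y => (c⁻¹ * y) ^ n * g y) c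
  simp only [smul_eq_mul, abs_inv, abs_of_pos hc, inv_mul_cancel_left₀ hc.ne', mul_pow,
    mul_assoc] at h
  rw [h, integral_const_mul, ← mul_assoc, ← pow_succ', inv_pow]

lemma integrable_pow_mul_exp_neg_mul_sq {b : ℝ} (hb : 0 < b) (n : ℕ) :
    Integrable fun x : ℝ => x ^ n * exp (-b * x ^ 2) := by
  simpa [rpow_natCast] using
    integrable_rpow_mul_exp_neg_mul_sq hb (s := n) (by linarith [n.cast_nonneg (α := ℝ)])

lemma integral_sub_pow_three_mul {μ : Measure ℝ} {f : ℝ → ℝ} (m : ℝ)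
    (hf : ∀ n ≤ 3, Integrable (fun x => x ^ n * f x) μ) :
    ∫ x, (x - m) ^ 3 * f x ∂μ =
      (∫ x, x ^ 3 * f x ∂μ) - 3 * m * (∫ x, x ^ 2 * f x ∂μ) + 3 * m ^ 2 * (∫ x, x * f x ∂μ) -
        m ^ 3 * ∫ x, f x ∂μ := by
  have h0 : Integrable f μ := by simpa using hf 0 (by norm_num)
  have h1 : Integrable (fun x => x * f x) μ := by simpa using hf 1 (by norm_num)
  have h2 := hf 2 (by norm_num)
  have h3 := hf 3 (by norm_num)
  rw [← integral_const_mul, ← integral_const_mul, ← integral_const_mul, ← integral_sub h3,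
    ← integral_add, ← integral_sub]
  · congr 1; ext x; ring
  all_goals fun_prop

lemma snPhi_eq_gaussianPDFReal : snPhi = gaussianPDFReal 0 1 := by
  ext x; simp [snPhi, gaussianPDFReal]

lemma snPhi_neg (x : ℝ) : snPhi (-x) = snPhi x := by simp [snPhi]

lemma continuous_snPhi : Continuous snPhi := by unfold snPhi; fun_prop

lemma abs_snPhi_le (x : ℝ) : |snPhi x| ≤ (√(2 * π))⁻¹ := by
  rw [abs_of_pos (by unfold snPhi; positivity)]
  exact mul_le_of_le_one_right (by positivity) (exp_le_one_iff.2 (by nlinarith [sq_nonneg x]))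

lemma hasDerivAt_snPhi (x : ℝ) : HasDerivAt snPhi (-x * snPhi x) x := by
  have h : HasDerivAt (fun y : ℝ => -y ^ 2 / 2) (-x) x :=
    ((hasDerivAt_pow 2 x).fun_neg.div_const 2).congr_deriv (by ring)
  exact (h.exp.const_mul (√(2 * π))⁻¹).congr_deriv (by simp only [snPhi]; ring)

lemma integrable_snPhi : Integrable snPhi :=
  snPhi_eq_gaussianPDFReal ▸ integrable_gaussianPDFReal 0 1

lemma integral_snPhi : ∫ x, snPhi x = 1 :=
  snPhi_eq_gaussianPDFReal ▸ integral_gaussianPDFReal_eq_one 0 one_ne_zero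

lemma integral_sq_mul_snPhi : ∫ x, x ^ 2 * snPhi x = 1 := by
  have h := variance_fun_id_gaussianReal (μ := 0) (v := 1)
  rw [variance_eq_integral aemeasurable_id', integral_gaussianReal_eq_integral_smul one_ne_zero]
    at h
  simpa [snPhi_eq_gaussianPDFReal, integral_id_gaussianReal, mul_comm] using h

lemma integrable_pow_mul_snPhi (n : ℕ) : Integrable fun x : ℝ => x ^ n * snPhi x := by
  refine ((integrable_pow_mul_exp_neg_mul_sq one_half_pos n).const_mul (√(2 * π))⁻¹).congr
    (ae_of_all _ fun x => ?_)
  simp only [snPhi]; ring_nf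

lemma integrable_pow_mul_snPhi_mul {g : ℝ → ℝ} {C : ℝ} (hg : AEStronglyMeasurable g)
    (hC : ∀ x, |g x| ≤ C) (n : ℕ) : Integrable fun x : ℝ => x ^ n * snPhi x * g x :=
  (integrable_pow_mul_snPhi n).mul_bdd hg (ae_of_all _ hC)

lemma snPhi_mul_snPhi_mul (α x : ℝ) :
    snPhi x * snPhi (α * x) = (√(2 * π))⁻¹ * snPhi (√(1 + α ^ 2) * x) := by
  simp only [snPhi, mul_pow, sq_sqrt (by positivity : (0 : ℝ) ≤ 1 + α ^ 2)]
  rw [mul_mul_mul_comm, ← exp_add, mul_assoc]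
  ring_nf

lemma sqrt_two_div_pi : √(2 / π) = 2 * (√(2 * π))⁻¹ := by
  rw [sqrt_div zero_le_two, sqrt_mul zero_le_two]
  have h2 : √2 ≠ 0 := by positivity
  field_simp
  rw [sq_sqrt zero_le_two]

lemma integral_mul_snPhi_mul_eq {h h' : ℝ → ℝ} (hh : ∀ x, HasDerivAt h (h' x) x)
    (hint : Integrable fun x => x * snPhi x * h x) (hint' : Integrable fun x => snPhi x * h' x)
    (hint₀ : Integrable fun x => snPhi x * h x) :
    ∫ x, x * snPhi x * h x = ∫ x, snPhi x * h' x := by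
  have hv : ∀ x, HasDerivAt (fun y => -snPhi y) (x * snPhi x) x := fun x => by
    simpa using (hasDerivAt_snPhi x).fun_neg
  have key := integral_mul_deriv_eq_deriv_mul_of_integrable (fun x _ => hh x) (fun x _ => hv x)
    (hint.congr (ae_of_all _ fun x => by simp only [Pi.mul_apply]; ring))
    (hint'.neg.congr (ae_of_all _ fun x => by simp only [Pi.mul_apply, Pi.neg_apply]; ring))
    (hint₀.neg.congr (ae_of_all _ fun x => by simp only [Pi.mul_apply, Pi.neg_apply]; ring))
  simp only [mul_neg, integral_neg, neg_neg] at key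
  simpa only [mul_comm, mul_left_comm] using key

lemma snCdf_neg_add_snCdf (x : ℝ) : snCdf (-x) + snCdf x = 1 := by
  have h : snCdf x = ∫ t in Ioi (-x), snPhi t := by
    simp only [snCdf, ← integral_comp_neg_Iic, snPhi_neg]
  rw [h, snCdf, intervalIntegral.integral_Iic_add_Ioi integrable_snPhi.integrableOn
    integrable_snPhi.integrableOn, integral_snPhi]

lemma snCdf_nonneg (x : ℝ) : 0 ≤ snCdf x :=
  setIntegral_nonneg measurableSet_Iic fun t _ => by unfold snPhi; positivity

lemma hasDerivAt_snCdf (x : ℝ) : HasDerivAt snCdf (snPhi x) x := by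
  have h : snCdf = fun z => snCdf 0 + ∫ t in (0 : ℝ)..z, snPhi t := by
    ext z
    rw [← intervalIntegral.integral_Iic_sub_Iic integrable_snPhi.integrableOn
      integrable_snPhi.integrableOn, snCdf, snCdf]
    ring
  rw [h]
  exact (intervalIntegral.integral_hasDerivAt_right (continuous_snPhi.intervalIntegrable 0 x)
    (continuous_snPhi.stronglyMeasurableAtFilter _ _) continuous_snPhi.continuousAt).const_add _

section SkewNormal

variable (α : ℝ)

lemma abs_two_mul_snCdf_mul_sub_one_le (x : ℝ) : |2 * snCdf (α * x) - 1| ≤ 1 := by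
  have h₁ := snCdf_nonneg (α * x)
  have h₂ := snCdf_nonneg (-(α * x))
  have h₃ := snCdf_neg_add_snCdf (α * x)
  rw [abs_le]; constructor <;> linarith

lemma hasDerivAt_two_mul_snCdf_mul_sub_one (x : ℝ) :
    HasDerivAt (fun y => 2 * snCdf (α * y) - 1) (2 * α * snPhi (α * x)) x :=
  (((hasDerivAt_snCdf (α * x)).comp x ((hasDerivAt_id x).const_mul α)).const_mul 2).sub_const 1
    |>.congr_deriv (by simp only [mul_one]; ring)

lemma integrable_pow_mul_snPhi_mul_two_mul_snCdf_sub_one (n : ℕ) :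
    Integrable fun x => x ^ n * snPhi x * (2 * snCdf (α * x) - 1) :=
  integrable_pow_mul_snPhi_mul
    (continuous_iff_continuousAt.2 fun x =>
      (hasDerivAt_two_mul_snCdf_mul_sub_one α x).continuousAt).aestronglyMeasurable
    (abs_two_mul_snCdf_mul_sub_one_le α) n

lemma integrable_pow_mul_snPhi_mul_snPhi_mul (n : ℕ) :
    Integrable fun x => x ^ n * snPhi x * snPhi (α * x) :=
  integrable_pow_mul_snPhi_mul
    (continuous_snPhi.comp (continuous_const_mul α)).aestronglyMeasurable
    (fun x => abs_snPhi_le (α * x)) n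

lemma integral_pow_mul_snPhi_mul_snPhi_mul (n : ℕ) :
    ∫ x, x ^ n * snPhi x * snPhi (α * x) =
      (√(2 * π))⁻¹ * (√(1 + α ^ 2) ^ (n + 1))⁻¹ * ∫ x, x ^ n * snPhi x := by
  simp only [mul_assoc, snPhi_mul_snPhi_mul, mul_left_comm _ (√(2 * π))⁻¹, integral_const_mul]
  rw [integral_pow_mul_comp_mul_left snPhi (by positivity)]

lemma integral_mul_snPhi_mul_two_mul_snCdf_sub_one :
    ∫ x, x * snPhi x * (2 * snCdf (α * x) - 1) = 2 * α * (√(2 * π))⁻¹ * (√(1 + α ^ 2))⁻¹ := by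
  rw [integral_mul_snPhi_mul_eq (hasDerivAt_two_mul_snCdf_mul_sub_one α)
    (by simpa using integrable_pow_mul_snPhi_mul_two_mul_snCdf_sub_one α 1)
    (by simpa [mul_left_comm] using
      (integrable_pow_mul_snPhi_mul_snPhi_mul α 0).const_mul (2 * α))
    (by simpa using integrable_pow_mul_snPhi_mul_two_mul_snCdf_sub_one α 0)]
  have h := integral_pow_mul_snPhi_mul_snPhi_mul α 0
  simp only [pow_zero, one_mul, zero_add, pow_one, integral_snPhi, mul_one] at h
  simp_rw [mul_left_comm (snPhi _) (2 * α)]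
  rw [integral_const_mul, h]
  ring

lemma integral_pow_three_mul_snPhi_mul_two_mul_snCdf_sub_one :
    ∫ x, x ^ 3 * snPhi x * (2 * snCdf (α * x) - 1) =
      2 * (∫ x, x * snPhi x * (2 * snCdf (α * x) - 1)) +
        2 * α * (√(2 * π))⁻¹ * (√(1 + α ^ 2) ^ 3)⁻¹ := by
  have hderiv (x : ℝ) : HasDerivAt (fun y => y ^ 2 * (2 * snCdf (α * y) - 1))
      (2 * x * (2 * snCdf (α * x) - 1) + x ^ 2 * (2 * α * snPhi (α * x))) x := by
    simpa using (hasDerivAt_pow 2 x).fun_mul (hasDerivAt_two_mul_snCdf_mul_sub_one α x)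
  have hψ := integrable_pow_mul_snPhi_mul_two_mul_snCdf_sub_one α
  have hφ := (integrable_pow_mul_snPhi_mul_snPhi_mul α 2).const_mul (2 * α)
  have hψ₁ := (hψ 1).const_mul 2
  have hsplit (x : ℝ) :
      snPhi x * (2 * x * (2 * snCdf (α * x) - 1) + x ^ 2 * (2 * α * snPhi (α * x))) =
        2 * (x ^ 1 * snPhi x * (2 * snCdf (α * x) - 1)) +
        2 * α * (x ^ 2 * snPhi x * snPhi (α * x)) := by
    ring
  calc ∫ x, x ^ 3 * snPhi x * (2 * snCdf (α * x) - 1)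
      = ∫ x, x * snPhi x * (x ^ 2 * (2 * snCdf (α * x) - 1)) := by
        congr 1; ext x; ring
    _ = ∫ x, snPhi x * (2 * x * (2 * snCdf (α * x) - 1) + x ^ 2 * (2 * α * snPhi (α * x))) :=
      integral_mul_snPhi_mul_eq hderiv ((hψ 3).congr (ae_of_all _ fun x => by ring))
        (by simpa only [hsplit] using hψ₁.fun_add hφ)
        ((hψ 2).congr (ae_of_all _ fun x => by ring))
    _ = _ := by
      simp only [hsplit]
      rw [integral_add hψ₁ hφ, integral_const_mul, integral_const_mul,
        integral_pow_mul_snPhi_mul_snPhi_mul, integral_sq_mul_snPhi]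
      simp only [pow_one]
      ring

lemma pow_mul_skewNormal_eq (n : ℕ) (x : ℝ) :
    x ^ n * (2 * snPhi x * snCdf (α * x)) =
      x ^ n * snPhi x + x ^ n * snPhi x * (2 * snCdf (α * x) - 1) := by
  ring

lemma integrable_pow_mul_skewNormal (n : ℕ) :
    Integrable fun x => x ^ n * (2 * snPhi x * snCdf (α * x)) := by
  simpa only [pow_mul_skewNormal_eq] using
    (integrable_pow_mul_snPhi n).fun_add (integrable_pow_mul_snPhi_mul_two_mul_snCdf_sub_one α n)

lemma integral_pow_mul_skewNormal_of_even {n : ℕ} (hn : Even n) :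
    ∫ x, x ^ n * (2 * snPhi x * snCdf (α * x)) = ∫ x, x ^ n * snPhi x := by
  have hodd : ∫ x, x ^ n * snPhi x * (2 * snCdf (α * x) - 1) = 0 :=
    Function.Odd.integral_eq_zero fun x => by
      have := snCdf_neg_add_snCdf (α * x)
      rw [hn.neg_pow, snPhi_neg, mul_neg]
      linear_combination 2 * x ^ n * snPhi x * this
  simp only [pow_mul_skewNormal_eq]
  rw [integral_add (integrable_pow_mul_snPhi n)
    (integrable_pow_mul_snPhi_mul_two_mul_snCdf_sub_one α n), hodd, add_zero]

lemma integral_pow_mul_skewNormal_of_odd {n : ℕ} (hn : Odd n) :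
    ∫ x, x ^ n * (2 * snPhi x * snCdf (α * x)) =
      ∫ x, x ^ n * snPhi x * (2 * snCdf (α * x) - 1) := by
  have hodd : ∫ x, x ^ n * snPhi x = 0 :=
    Function.Odd.integral_eq_zero fun x => by rw [hn.neg_pow, snPhi_neg, neg_mul]
  simp only [pow_mul_skewNormal_eq]
  rw [integral_add (integrable_pow_mul_snPhi n)
    (integrable_pow_mul_snPhi_mul_two_mul_snCdf_sub_one α n), hodd, zero_add]

lemma integral_mul_skewNormal :
    ∫ x, x * (2 * snPhi x * snCdf (α * x)) = α / √(1 + α ^ 2) * √(2 / π) := by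
  have h := integral_pow_mul_skewNormal_of_odd α odd_one
  simp only [pow_one] at h
  rw [h, integral_mul_snPhi_mul_two_mul_snCdf_sub_one, sqrt_two_div_pi]
  ring

lemma integral_pow_three_mul_skewNormal :
    ∫ x, x ^ 3 * (2 * snPhi x * snCdf (α * x)) =
      α / √(1 + α ^ 2) * √(2 / π) * (3 - (α / √(1 + α ^ 2)) ^ 2) := by
  rw [integral_pow_mul_skewNormal_of_odd α (by decide),
    integral_pow_three_mul_snPhi_mul_two_mul_snCdf_sub_one,
    integral_mul_snPhi_mul_two_mul_snCdf_sub_one, sqrt_two_div_pi, div_pow,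
    sq_sqrt (by positivity : (0 : ℝ) ≤ 1 + α ^ 2)]
  have hc : √(1 + α ^ 2) ≠ 0 := by positivity
  field_simp
  rw [sq_sqrt (by positivity : (0 : ℝ) ≤ 1 + α ^ 2)]
  ring

end SkewNormal

/-- Third central moment and Pearson's skewness index of the standard skew normal. -/
theorem skew_normal_third_central_moment_and_skewness
    (α : ℝ) (δ : ℝ) (hδ : δ = α / Real.sqrt (1 + α ^ 2)) :
    (∫ x : ℝ, (x - δ * Real.sqrt (2 / Real.pi)) ^ 3 * (2 * snPhi x * snCdf (α * x)) =
      (4 - Real.pi) / 2 * δ ^ 3 * (2 / Real.pi) ^ ((3 : ℝ) / 2)) ∧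
    ((∫ x : ℝ, (x - δ * Real.sqrt (2 / Real.pi)) ^ 3 * (2 * snPhi x * snCdf (α * x))) /
        (1 - 2 * δ ^ 2 / Real.pi) ^ ((3 : ℝ) / 2) =
      (4 - Real.pi) / 2 * δ ^ 3 * (2 / Real.pi) ^ ((3 : ℝ) / 2) /
        (1 - 2 * δ ^ 2 / Real.pi) ^ ((3 : ℝ) / 2)) := by
  have hM₀ := integral_pow_mul_skewNormal_of_even α (n := 0) (by decide)
  have hM₂ := integral_pow_mul_skewNormal_of_even α (n := 2) (by decide)
  simp only [pow_zero, one_mul, integral_snPhi, integral_sq_mul_snPhi] at hM₀ hM₂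
  have hcentral : ∫ x, (x - δ * √(2 / π)) ^ 3 * (2 * snPhi x * snCdf (α * x)) =
      (4 - π) / 2 * δ ^ 3 * (2 / π) ^ ((3 : ℝ) / 2) := by
    rw [integral_sub_pow_three_mul _ fun n _ => integrable_pow_mul_skewNormal α n, hM₀, hM₂,
      integral_mul_skewNormal, integral_pow_three_mul_skewNormal, ← hδ,
      rpow_div_two_eq_sqrt _ (by positivity)]
    have hb : √(2 / π) ^ 2 * π = 2 := by rw [sq_sqrt (by positivity)]; field_simp
    norm_cast
    linear_combination δ ^ 3 * √(2 / π) / 2 * hb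
  exact ⟨hcentral, by rw [hcentral]⟩
end
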